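/- Fenchel-type inequality for composite functions: Let F : ℝ^J → ℝ^M be continuously differentiable, g : ℝ^M → ℝ ∪ {+∞} proper closed convex with g∘F not identically +∞ and (x,u) ↦ g(F(x)+u) jointly convex. Then for any x̄, w̄ ∈ ℝ^J and y ∈ ℝ^M: g(F(x̄)) + (∇F(w̄) w̄ − F(w̄))·y + g*(y) ≥ (∇F(w̄)ᵀ y)·x̄. -/

import Mathlib

/-!
If `g*(y) = +∞` the right-hand side is `+∞`. Otherwise joint convexity makes `x ↦ ⟪y, F x⟫`
convex: translating the argument of `g` by the convexity gap
`F (a x₁ + b x₂) - (a F x₁ + b F x₂)` does not increase `g`, so the affine minorant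
`⟪y, ·⟫ - g*(y)` of `g` forces `⟪y, gap⟫ ≤ 0`. The gradient inequality for this convex function
at `w`, `⟪y, F w⟫ + ⟪y, ∇F(w) (x - w)⟫ ≤ ⟪y, F x⟫`, combined with the Fenchel–Young inequality
`⟪y, F x⟫ ≤ g (F x) + g*(y)`, is the claim.
-/

open scoped RealInnerProductSpace

noncomputable section

/-- Convex conjugate of an extended-real-valued function on a real inner product space. -/
def conjFn {E : Type*} [NormedAddCommGroup E] [InnerProductSpace ℝ E]
    (g : E → EReal) (y : E) : EReal :=
  ⨆ z : E, ((⟪y, z⟫ : ℝ) : EReal) - g z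

/-- A proper extended-real-valued function: somewhere finite, never `-∞`. -/
def ProperFn {E : Type*} (g : E → EReal) : Prop :=
  (∃ z, g z ≠ ⊤) ∧ ∀ z, g z ≠ ⊥

/-- Convexity of an extended-real-valued function, via convexity of its epigraph. -/
def ConvexFn {E : Type*} [AddCommMonoid E] [Module ℝ E] (g : E → EReal) : Prop :=
  Convex ℝ {p : E × ℝ | g p.1 ≤ (p.2 : EReal)}

section GradientInequality

variable {E : Type*} [NormedAddCommGroup E] [NormedSpace ℝ E]

lemma ConvexOn.add_le_of_hasFDerivAt {s : Set E} {φ : E → ℝ} {φ' : E →L[ℝ] ℝ} {w x : E}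
    (hφ : ConvexOn ℝ s φ) (hw : w ∈ s) (hx : x ∈ s) (hφ' : HasFDerivAt φ φ' w) :
    φ w + φ' (x - w) ≤ φ x := by
  let L : ℝ →ᵃ[ℝ] E := AffineMap.lineMap w x
  have hL : HasDerivAt (φ ∘ L) (φ' (x - w)) 0 := by
    have hφ'₀ : HasFDerivAt φ φ' (L 0) := by simpa [L] using hφ'
    exact hφ'₀.comp_hasDerivAt 0 AffineMap.hasDerivAt_lineMap
  have hslope := (hφ.comp_affineMap L).le_slope_of_hasDerivAt (x := 0) (y := 1)
    (by simpa [L] using hw) (by simpa [L] using hx) one_pos hL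
  simp only [slope_def_field, Function.comp_apply, L, AffineMap.lineMap_apply_zero,
    AffineMap.lineMap_apply_one, sub_zero, div_one] at hslope
  linarith

end GradientInequality

section Conjugate

variable {H : Type*} [NormedAddCommGroup H] [InnerProductSpace ℝ H] {g : H → EReal} {y : H}

lemma conjFn_ne_bot (hg : ∃ z, g z ≠ ⊤) (y : H) : conjFn g y ≠ ⊥ := by
  obtain ⟨z, hz⟩ := hg
  refine ne_bot_of_le_ne_bot ?_ (le_iSup (fun z => ((⟪y, z⟫ : ℝ) : EReal) - g z) z)
  revert hz
  induction g z <;> simp [← EReal.coe_sub]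

lemma inner_sub_le_of_conjFn_le {c : ℝ} (hc : conjFn g y ≤ c) (z : H) :
    ((⟪y, z⟫ - c : ℝ) : EReal) ≤ g z := by
  have hyz : ((⟪y, z⟫ : ℝ) : EReal) - g z ≤ c :=
    (le_iSup (fun z => ((⟪y, z⟫ : ℝ) : EReal) - g z) z).trans hc
  rw [EReal.sub_le_iff_le_add (.inr (EReal.coe_ne_top c)) (.inr (EReal.coe_ne_bot c)),
    add_comm] at hyz
  exact EReal.coe_sub _ _ ▸ EReal.sub_le_of_le_add hyz

end Conjugate

section JointConvexity

variable {E H : Type*} [AddCommGroup E] [Module ℝ E]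

lemma ConvexFn.apply_add_convexityGap_le [AddCommGroup H] [Module ℝ H] {F : E → H}
    {g : H → EReal} (hjoint : ConvexFn (fun p : E × H => g (F p.1 + p.2))) {x₁ x₂ : E} {a b : ℝ}
    (ha : 0 ≤ a) (hb : 0 ≤ b) (hab : a + b = 1) (z : H) :
    g (z + (F (a • x₁ + b • x₂) - (a • F x₁ + b • F x₂))) ≤ g z := by
  refine EReal.le_of_forall_lt_iff_le.mp fun r hr => ?_
  have hmem : ∀ x, ((x, z - F x), r) ∈ {p : (E × H) × ℝ | g (F p.1.1 + p.1.2) ≤ p.2} :=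
    fun x => by simpa using hr.le
  have hcomb := hjoint (hmem x₁) (hmem x₂) ha hb hab
  have hz : a • (z - F x₁) + b • (z - F x₂) = z - (a • F x₁ + b • F x₂) := by
    rw [smul_sub, smul_sub, sub_add_sub_comm, ← add_smul, hab, one_smul]
  simp only [Set.mem_ofPred_eq, Prod.smul_mk, Prod.mk_add_mk, smul_eq_mul, ← add_mul, hab,
    one_mul, hz] at hcomb
  rwa [add_sub_left_comm] at hcomb

lemma convexOn_inner_comp_of_conjFn_eq [NormedAddCommGroup H] [InnerProductSpace ℝ H]
    {F : E → H} {g : H → EReal} (hjoint : ConvexFn (fun p : E × H => g (F p.1 + p.2)))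
    {y : H} {c : ℝ} (hc : conjFn g y = c) :
    ConvexOn ℝ Set.univ (fun x => ⟪y, F x⟫) := by
  refine ⟨convex_univ, fun x₁ _ x₂ _ a b ha hb hab => ?_⟩
  set d := F (a • x₁ + b • x₂) - (a • F x₁ + b • F x₂)
  have hbound : conjFn g y ≤ ((c - ⟪y, d⟫ : ℝ) : EReal) := iSup_le fun z => calc
    ((⟪y, z⟫ : ℝ) : EReal) - g z ≤ ((⟪y, z⟫ : ℝ) : EReal) - ((⟪y, z + d⟫ - c : ℝ) : EReal) :=
      EReal.sub_le_sub le_rfl ((inner_sub_le_of_conjFn_le hc.le _).trans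
        (hjoint.apply_add_convexityGap_le ha hb hab z))
    _ = ((c - ⟪y, d⟫ : ℝ) : EReal) := by
      rw [← EReal.coe_sub, inner_add_right]
      ring_nf
  rw [hc, EReal.coe_le_coe_iff] at hbound
  have hd : ⟪y, d⟫ = ⟪y, F (a • x₁ + b • x₂)⟫ - (a * ⟪y, F x₁⟫ + b * ⟪y, F x₂⟫) := by
    simp only [d, inner_sub_right, inner_add_right, real_inner_smul_right]
  simp only [smul_eq_mul]
  linarith

end JointConvexity

theorem composite_fenchel_inequality_general {J M : Type*} [Fintype J] [Fintype M]
    (F : EuclideanSpace ℝ J → EuclideanSpace ℝ M)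
    (g : EuclideanSpace ℝ M → EReal)
    (hF : ContDiff ℝ 1 F)
    (hgproper : ProperFn g)
    (hjoint : ConvexFn
      (fun p : EuclideanSpace ℝ J × EuclideanSpace ℝ M => g (F p.1 + p.2)))
    (x w : EuclideanSpace ℝ J) (y : EuclideanSpace ℝ M) :
    ((⟪(fderiv ℝ F w).adjoint y, x⟫ : ℝ) : EReal)
      ≤ g (F x) + (((⟪(fderiv ℝ F w) w - F w, y⟫ : ℝ) : EReal) + conjFn g y) := by
  set A := fderiv ℝ F w
  cases hc : conjFn g y with
  | bot => exact absurd hc (conjFn_ne_bot hgproper.1 y)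
  | top => simp [EReal.add_top_of_ne_bot, hgproper.2]
  | coe c =>
    have hFA : HasFDerivAt F A w := (hF.differentiable one_ne_zero w).hasFDerivAt
    have hgrad := (convexOn_inner_comp_of_conjFn_eq hjoint hc).add_le_of_hasFDerivAt
      (Set.mem_univ w) (Set.mem_univ x) ((innerSL ℝ y).hasFDerivAt.comp w hFA)
    have hreal : ⟪A.adjoint y, x⟫ ≤ (⟪y, F x⟫ - c) + (⟪A w - F w, y⟫ + c) := by
      simp only [ContinuousLinearMap.comp_apply, innerSL_apply_apply, map_sub] at hgrad
      rw [ContinuousLinearMap.adjoint_inner_left, inner_sub_left, real_inner_comm y (A w),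
        real_inner_comm y (F w)]
      linarith
    calc ((⟪A.adjoint y, x⟫ : ℝ) : EReal)
        ≤ ((⟪y, F x⟫ - c : ℝ) : EReal) + ((⟪A w - F w, y⟫ : ℝ) + c) := by exact_mod_cast hreal
      _ ≤ g (F x) + ((⟪A w - F w, y⟫ : ℝ) + c) :=
        add_le_add_left (inner_sub_le_of_conjFn_le hc.le (F x)) _

/-- Fenchel-type inequality for composite functions:
`g(F(x̄)) + (∇F(w̄) w̄ − F(w̄))·y + g*(y) ≥ (∇F(w̄)ᵀ y)·x̄`. -/
theorem composite_fenchel_inequality {J M : Type*} [Fintype J] [Fintype M]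
    (F : EuclideanSpace ℝ J → EuclideanSpace ℝ M)
    (g : EuclideanSpace ℝ M → EReal)
    (hF : ContDiff ℝ 1 F)
    (hgproper : ProperFn g)
    (hgclosed : LowerSemicontinuous g)
    (hgconv : ConvexFn g)
    (hgFproper : ∃ x, g (F x) ≠ ⊤)
    (hjoint : ConvexFn
      (fun p : EuclideanSpace ℝ J × EuclideanSpace ℝ M => g (F p.1 + p.2)))
    (x w : EuclideanSpace ℝ J) (y : EuclideanSpace ℝ M) :
    ((⟪(fderiv ℝ F w).adjoint y, x⟫ : ℝ) : EReal)
      ≤ g (F x) + (((⟪(fderiv ℝ F w) w - F w, y⟫ : ℝ) : EReal) + conjFn g y) :=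
  composite_fenchel_inequality_general F g hF hgproper hjoint x w y
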